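/- arXiv:1702.00354 — 6 statements merged into one kernel-verified Lean document; each statement's English description precedes it below -/
import Mathlib

section
/- Fix real numbers x* and C. Let x : ℝ → ℝ be defined by x(t) = a t² + b t with a = 3x* − 6C and b = 6C − 2x*. Then x(0) = 0, x(1) = x*, and ∫₀¹ x(t) dt = C; moreover, for every continuously differentiable function y : ℝ → ℝ satisfying y(0) = 0, y(1) = x* and ∫₀¹ y(t) dt = C, we have ∫₀¹ (x'(t))² dt ≤ ∫₀¹ (y'(t))² dt. That is, the quadratic trajectory x is the global minimizer of the control energy ∫₀¹ (ẏ)² among all trajectories with the prescribed endpoint and integral constraint. -/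
/-! The optimal velocity `x' = 2at + b` is affine, and integrating by parts shows that an affine
function is `L²`-orthogonal to `h'` whenever `h` vanishes at both endpoints and has zero mean.
Every admissible `y` differs from `x` by such an `h`, so
`∫ y'² = ∫ x'² + 2 ∫ x' h' + ∫ h'² = ∫ x'² + ∫ h'² ≥ ∫ x'²`. -/

open intervalIntegral

theorem deriv_mul_sq_add_mul (a b : ℝ) :
    deriv (fun t => a * t ^ 2 + b * t) = fun t => 2 * a * t + b := by
  funext t
  rw [deriv_fun_add (by fun_prop) (by fun_prop), deriv_const_mul _ (by fun_prop),
    deriv_const_mul _ (by fun_prop)]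
  simp only [deriv_pow_field, deriv_id'']
  ring

theorem integral_mul_sq_add_mul_zero_one (a b : ℝ) :
    ∫ t in (0:ℝ)..1, a * t ^ 2 + b * t = a / 3 + b / 2 := by
  rw [integral_add, integral_const_mul, integral_const_mul, integral_pow, integral_id]
  · ring
  all_goals apply Continuous.intervalIntegrable; fun_prop

theorem integral_affine_mul_deriv_eq_zero {h : ℝ → ℝ} {u v : ℝ} (α β : ℝ)
    (hh : ContDiff ℝ 1 h) (hu : h u = 0) (hv : h v = 0) (hmean : ∫ t in u..v, h t = 0) :
    ∫ t in u..v, (α * t + β) * deriv h t = 0 := by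
  have hp : ∀ t ∈ Set.uIcc u v, HasDerivAt (fun t => α * t + β) α t := fun t _ => by
    simpa using ((hasDerivAt_id t).const_mul α).add_const β
  have hh' : ∀ t ∈ Set.uIcc u v, HasDerivAt h (deriv h t) t := fun t _ =>
    (hh.differentiable one_ne_zero t).hasDerivAt
  rw [integral_mul_deriv_eq_deriv_mul hp hh' intervalIntegrable_const
    ((hh.continuous_deriv le_rfl).intervalIntegrable u v), integral_const_mul, hu, hv, hmean]
  ring

theorem integral_sq_le_of_integral_mul_sub_eq_zero {f g : ℝ → ℝ} {u v : ℝ} (huv : u ≤ v)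
    (hf : Continuous f) (hg : Continuous g) (horth : ∫ t in u..v, f t * (g t - f t) = 0) :
    ∫ t in u..v, f t ^ 2 ≤ ∫ t in u..v, g t ^ 2 := by
  have hsplit : ∫ t in u..v, g t ^ 2 =
      (∫ t in u..v, f t ^ 2) + 2 * (∫ t in u..v, f t * (g t - f t)) +
        ∫ t in u..v, (g t - f t) ^ 2 := by
    rw [← integral_const_mul, ← integral_add, ← integral_add]
    · exact integral_congr fun t _ => by ring
    all_goals apply Continuous.intervalIntegrable; fun_prop
  have hrest : 0 ≤ ∫ t in u..v, (g t - f t) ^ 2 := integral_nonneg huv fun t _ => sq_nonneg _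
  rw [hsplit, horth]
  linarith

/-- **The quadratic trajectory is the minimum-energy driver trajectory.**
With `a = 3x* − 6C`, `b = 6C − 2x*`, the trajectory `x(t) = a t² + b t` satisfies
`x(0) = 0`, `x(1) = x*`, `∫₀¹ x = C`, and minimizes the energy `∫₀¹ (ẏ)²` among all
`C¹` trajectories `y` with `y(0) = 0`, `y(1) = x*`, `∫₀¹ y = C`. -/
theorem quadratic_trajectory_minimizes_energy
    (xs C a b : ℝ) (ha : a = 3 * xs - 6 * C) (hb : b = 6 * C - 2 * xs)
    (x : ℝ → ℝ) (hx : ∀ t, x t = a * t ^ 2 + b * t) :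
    x 0 = 0 ∧ x 1 = xs ∧ (∫ t in (0:ℝ)..1, x t) = C ∧
      ∀ y : ℝ → ℝ, ContDiff ℝ 1 y → y 0 = 0 → y 1 = xs →
        (∫ t in (0:ℝ)..1, y t) = C →
        (∫ t in (0:ℝ)..1, (deriv x t) ^ 2) ≤ ∫ t in (0:ℝ)..1, (deriv y t) ^ 2 := by
  obtain rfl : x = fun t => a * t ^ 2 + b * t := funext hx
  have hx1 : a + b = xs := by rw [ha, hb]; ring
  have hxC : ∫ t in (0:ℝ)..1, a * t ^ 2 + b * t = C := by
    rw [integral_mul_sq_add_mul_zero_one, ha, hb]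
    ring
  refine ⟨by simp, by simpa using hx1, hxC, fun y hy hy0 hy1 hyC => ?_⟩
  have hxC1 : ContDiff ℝ 1 fun t => a * t ^ 2 + b * t := by fun_prop
  have hmean : ∫ t in (0:ℝ)..1, y t - (a * t ^ 2 + b * t) = 0 := by
    rw [integral_sub (hy.continuous.intervalIntegrable 0 1)
      (hxC1.continuous.intervalIntegrable 0 1), hyC, hxC, sub_self]
  have horth : ∫ t in (0:ℝ)..1, (2 * a * t + b) * deriv (fun t => y t - (a * t ^ 2 + b * t)) t
      = 0 :=
    integral_affine_mul_deriv_eq_zero (2 * a) b (hy.sub hxC1) (by simp [hy0])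
      (by simp [hy1, hx1]) hmean
  refine integral_sq_le_of_integral_mul_sub_eq_zero zero_le_one
    (hxC1.continuous_deriv le_rfl) (hy.continuous_deriv le_rfl) ?_
  refine (integral_congr fun t _ => ?_).trans horth
  rw [deriv_fun_sub (hy.differentiable one_ne_zero t) (hxC1.differentiable one_ne_zero t),
    deriv_mul_sq_add_mul]
end

section
/- Let N, M be positive natural numbers, A21 a real M × N matrix such that Q = A21·A21ᵀ is invertible, and fix x_d* ∈ ℝ^N and x_nd* ∈ ℝ^M. Define v₁ = x_nd* − (1/2)·A21·x_d* ∈ ℝ^M and f(C) = 12⟨C, C⟩ − 12⟨C, x_d*⟩ + 4⟨x_d*, x_d*⟩ for C ∈ ℝ^N, where ⟨·,·⟩ is the standard inner product on ℝ^N. Then for every C ∈ ℝ^N satisfying the constraint A21·C = x_nd*, we have f(C) ≥ 12·⟨v₁, Q⁻¹·v₁⟩ + ⟨x_d*, x_d*⟩. -/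
open Matrix

/-- **Lower bound for the constrained total control energy.**
With `Q = A21·A21ᵀ` invertible, `v₁ = x_nd* − (1/2)A21 x_d*` and
`f(C) = 12⟨C,C⟩ − 12⟨C,x_d*⟩ + 4⟨x_d*,x_d*⟩`, every `C` with `A21·C = x_nd*`
satisfies `f(C) ≥ 12⟨v₁, Q⁻¹v₁⟩ + ⟨x_d*, x_d*⟩`. -/
theorem total_energy_lower_bound
    (N M : ℕ) (hN : 0 < N) (hM : 0 < M)
    (A21 : Matrix (Fin M) (Fin N) ℝ)
    (Q : Matrix (Fin M) (Fin M) ℝ) (hQ : Q = A21 * A21ᵀ) (hQinv : IsUnit Q)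
    (xd : Fin N → ℝ) (xnd : Fin M → ℝ)
    (v₁ : Fin M → ℝ) (hv₁ : v₁ = xnd - (1 / 2 : ℝ) • A21.mulVec xd)
    (f : (Fin N → ℝ) → ℝ)
    (hf : ∀ C, f C = 12 * (C ⬝ᵥ C) - 12 * (C ⬝ᵥ xd) + 4 * (xd ⬝ᵥ xd)) :
    ∀ C : Fin N → ℝ, A21.mulVec C = xnd →
      f C ≥ 12 * (v₁ ⬝ᵥ Q⁻¹.mulVec v₁) + xd ⬝ᵥ xd := by
  intro C hC
  have hdet : IsUnit Q.det := (Matrix.isUnit_iff_isUnit_det Q).mp hQinv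
  set y : Fin N → ℝ := C - (1 / 2 : ℝ) • xd with hy
  set z : Fin M → ℝ := Q⁻¹.mulVec v₁ with hz
  set w : Fin N → ℝ := A21ᵀ.mulVec z with hw
  -- A21 y = v₁
  have hAy : A21.mulVec y = v₁ := by
    rw [hy, hv₁, Matrix.mulVec_sub, Matrix.mulVec_smul, hC]
  -- y ⬝ᵥ w = v₁ ⬝ᵥ z
  have hyw : y ⬝ᵥ w = v₁ ⬝ᵥ z := by
    rw [hw, Matrix.dotProduct_mulVec, Matrix.vecMul_transpose, hAy]
  -- w ⬝ᵥ w = v₁ ⬝ᵥ z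
  have hww : w ⬝ᵥ w = v₁ ⬝ᵥ z := by
    have hAw : A21.mulVec w = v₁ := by
      rw [hw, Matrix.mulVec_mulVec, ← hQ, hz, Matrix.mulVec_mulVec,
        Matrix.mul_nonsing_inv Q hdet, Matrix.one_mulVec]
    calc w ⬝ᵥ w = A21.mulVec w ⬝ᵥ z := by
          rw [hw]
          rw [Matrix.dotProduct_mulVec, Matrix.vecMul_transpose]
      _ = v₁ ⬝ᵥ z := by rw [hAw]
  have hwy : w ⬝ᵥ y = v₁ ⬝ᵥ z := by rw [dotProduct_comm, hyw]
  have hnn : (0:ℝ) ≤ (y - w) ⬝ᵥ (y - w) := by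
    apply Finset.sum_nonneg
    intro i _
    exact mul_self_nonneg _
  have hexp : (y - w) ⬝ᵥ (y - w) = y ⬝ᵥ y - v₁ ⬝ᵥ z := by
    rw [sub_dotProduct y w (y - w), dotProduct_sub y y w,
      dotProduct_sub w y w, hyw, hwy, hww]
    ring
  have hkey : v₁ ⬝ᵥ z ≤ y ⬝ᵥ y := by linarith [hexp ▸ hnn]
  have hyy : y ⬝ᵥ y = C ⬝ᵥ C - C ⬝ᵥ xd + (1/4 : ℝ) * (xd ⬝ᵥ xd) := by
    rw [hy, sub_dotProduct, dotProduct_sub, dotProduct_sub,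
      smul_dotProduct, dotProduct_smul, smul_dotProduct,
      dotProduct_comm xd C]
    simp [smul_eq_mul]
    ring
  rw [hf C]
  linarith [hkey, hyy]
end

section
/- Let N, M be positive natural numbers, A21 a real M × N matrix such that Q = A21·A21ᵀ is invertible, and fix x_d* ∈ ℝ^N and x_nd* ∈ ℝ^M; set v₁ = x_nd* − (1/2)·A21·x_d*. Then for every continuously differentiable trajectory x_d : ℝ → ℝ^N satisfying x_d(0) = 0, x_d(1) = x_d*, and A21 · (∫₀¹ x_d(τ) dτ) = x_nd*, the control energy satisfies ∫₀¹ ‖x_d'(t)‖² dt ≥ 12·⟨v₁, Q⁻¹·v₁⟩ + ⟨x_d*, x_d*⟩. -/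
/-!
Completing the square against the candidate optimal control
`g t = x_d* + (6 - 12 t) • c`, `c = A21ᵀ Q⁻¹ v₁`, gives `‖ẋ_d‖² ≥ 2 ⟪g, ẋ_d⟫ - ‖g‖²` pointwise.
Since `g` is affine, integration by parts turns `∫ ⟪g, ẋ_d⟫` into boundary terms plus
`12 ⟪c, ∫ x_d⟫`, which the terminal constraint fixes; both `∫ ⟪g, ẋ_d⟫` and `∫ ‖g‖²` equal
`⟪x_d*, x_d*⟫ + 12 ⟪v₁, Q⁻¹ v₁⟫`.
-/

open Matrix MeasureTheory

section DotProduct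

variable {ι : Type*} [Fintype ι]

theorem HasDerivAt.dotProduct {𝕜 : Type*} [NontriviallyNormedField 𝕜] {f g : 𝕜 → ι → 𝕜}
    {f' g' : ι → 𝕜} {t : 𝕜} (hf : HasDerivAt f f' t) (hg : HasDerivAt g g' t) :
    HasDerivAt (fun s => f s ⬝ᵥ g s) (f' ⬝ᵥ g t + f t ⬝ᵥ g') t := by
  simp only [_root_.dotProduct, ← Finset.sum_add_distrib]
  exact HasDerivAt.fun_sum fun i _ => (hasDerivAt_pi.mp hf i).mul (hasDerivAt_pi.mp hg i)

theorem two_mul_dotProduct_sub_dotProduct_self_le (x y : ι → ℝ) :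
    2 * (y ⬝ᵥ x) - y ⬝ᵥ y ≤ x ⬝ᵥ x := by
  have h := dotProduct_self_star_nonneg (x - y)
  rw [star_trivial, sub_dotProduct, dotProduct_sub, dotProduct_sub, dotProduct_comm x y] at h
  linarith

namespace intervalIntegral

variable {a b : ℝ}

theorem integral_const_dotProduct {μ : Measure ℝ} (v : ι → ℝ) {f : ℝ → ι → ℝ}
    (hf : IntervalIntegrable f μ a b) :
    ∫ t in a..b, v ⬝ᵥ f t ∂μ = v ⬝ᵥ ∫ t in a..b, f t ∂μ :=
  (dotProductBilin ℝ ℝ v).toContinuousLinearMap.intervalIntegral_comp_comm hf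

theorem integral_dotProduct_deriv_eq_deriv_dotProduct {f g f' g' : ℝ → ι → ℝ}
    (hf : ∀ t, HasDerivAt f (f' t) t) (hg : ∀ t, HasDerivAt g (g' t) t)
    (hf' : Continuous f') (hg' : Continuous g') :
    ∫ t in a..b, f t ⬝ᵥ g' t = f b ⬝ᵥ g b - f a ⬝ᵥ g a - ∫ t in a..b, f' t ⬝ᵥ g t := by
  have hfc : Continuous f := continuous_iff_continuousAt.2 fun t => (hf t).continuousAt
  have hgc : Continuous g := continuous_iff_continuousAt.2 fun t => (hg t).continuousAt
  have hprod := integral_eq_sub_of_hasDerivAt (a := a) (b := b)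
    (fun t _ => (hf t).dotProduct (hg t))
    (Continuous.intervalIntegrable (by fun_prop) _ _)
  rw [integral_add ((hf'.dotProduct hgc).intervalIntegrable _ _)
    ((hfc.dotProduct hg').intervalIntegrable _ _)] at hprod
  linarith

theorem integral_add_smul_dotProduct_self (p c : ι → ℝ) {φ : ℝ → ℝ} (hφ : Continuous φ) :
    ∫ t in a..b, (p + φ t • c) ⬝ᵥ (p + φ t • c) =
      (b - a) * (p ⬝ᵥ p) + 2 * (∫ t in a..b, φ t) * (p ⬝ᵥ c) +
        (∫ t in a..b, φ t ^ 2) * (c ⬝ᵥ c) := by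
  have hexpand : ∀ t, (p + φ t • c) ⬝ᵥ (p + φ t • c) =
      p ⬝ᵥ p + (2 * (p ⬝ᵥ c)) * φ t + (c ⬝ᵥ c) * φ t ^ 2 := fun t => by
    simp only [add_dotProduct, dotProduct_add, smul_dotProduct, dotProduct_smul, smul_eq_mul,
      dotProduct_comm c p]
    ring
  simp_rw [hexpand]
  rw [integral_add (Continuous.intervalIntegrable (by fun_prop) _ _)
      (Continuous.intervalIntegrable (by fun_prop) _ _),
    integral_add intervalIntegrable_const (Continuous.intervalIntegrable (by fun_prop) _ _),
    integral_const, integral_const_mul, integral_const_mul, smul_eq_mul]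
  ring

theorem two_mul_integral_dotProduct_sub_le {u g : ℝ → ι → ℝ} (hab : a ≤ b) (hu : Continuous u)
    (hg : Continuous g) :
    2 * (∫ t in a..b, g t ⬝ᵥ u t) - ∫ t in a..b, g t ⬝ᵥ g t ≤ ∫ t in a..b, u t ⬝ᵥ u t := by
  rw [← integral_const_mul,
    ← integral_sub ((hg.dotProduct hu).intervalIntegrable _ _ |>.const_mul 2)
      ((hg.dotProduct hg).intervalIntegrable _ _)]
  exact integral_mono_on hab (Continuous.intervalIntegrable (by fun_prop) _ _)
    ((hu.dotProduct hu).intervalIntegrable _ _)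
    fun t _ => two_mul_dotProduct_sub_dotProduct_self_le (u t) (g t)

end intervalIntegral

end DotProduct

theorem control_energy_lower_bound_trajectory_general
    (N M : ℕ)
    (A21 : Matrix (Fin M) (Fin N) ℝ)
    (Q : Matrix (Fin M) (Fin M) ℝ) (hQ : Q = A21 * A21ᵀ) (hQinv : IsUnit Q)
    (xds : Fin N → ℝ) (xnds : Fin M → ℝ)
    (v₁ : Fin M → ℝ) (hv₁ : v₁ = xnds - (1 / 2 : ℝ) • A21.mulVec xds)
    (xd : ℝ → Fin N → ℝ) (hxd : ContDiff ℝ 1 xd)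
    (h0 : xd 0 = 0) (h1 : xd 1 = xds)
    (hconstraint : A21.mulVec (∫ τ in (0:ℝ)..1, xd τ) = xnds) :
    (∫ t in (0:ℝ)..1, (deriv xd t) ⬝ᵥ (deriv xd t)) ≥
      12 * (v₁ ⬝ᵥ Q⁻¹.mulVec v₁) + xds ⬝ᵥ xds := by
  set w := Q⁻¹ *ᵥ v₁
  set c := A21ᵀ *ᵥ w
  have hc : ∀ y, c ⬝ᵥ y = w ⬝ᵥ A21 *ᵥ y := fun y => by
    simp only [c, mulVec_transpose, dotProduct_mulVec]
  have hcc : c ⬝ᵥ c = v₁ ⬝ᵥ w := by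
    rw [hc, mulVec_mulVec, ← hQ, mulVec_mulVec,
      mul_nonsing_inv _ ((isUnit_iff_isUnit_det Q).mp hQinv), one_mulVec, dotProduct_comm]
  have hxd' : ∀ t, HasDerivAt xd (deriv xd t) t := fun t =>
    (hxd.differentiable one_ne_zero t).hasDerivAt
  have hxd'c : Continuous (deriv xd) := hxd.continuous_deriv le_rfl
  have hg' : ∀ t : ℝ, HasDerivAt (fun t : ℝ => xds + (6 - 12 * t) • c) ((-12 : ℝ) • c) t :=
    fun t => by
      simpa using (((hasDerivAt_id t).const_mul 12).const_sub 6).smul_const c |>.const_add xds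
  have hcross : ∫ t in (0:ℝ)..1, (xds + (6 - 12 * t) • c) ⬝ᵥ deriv xd t =
      xds ⬝ᵥ xds + 12 * (v₁ ⬝ᵥ w) := by
    rw [intervalIntegral.integral_dotProduct_deriv_eq_deriv_dotProduct hg' hxd' continuous_const
        hxd'c, intervalIntegral.integral_const_dotProduct _ (hxd.continuous.intervalIntegrable _ _),
      smul_dotProduct, hc, hconstraint, h0, h1, hv₁]
    simp only [add_dotProduct, smul_dotProduct, dotProduct_sub, dotProduct_smul, smul_eq_mul,
      dotProduct_zero, hc xds, dotProduct_comm _ w]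
    ring
  have hsq : ∫ t in (0:ℝ)..1, (xds + (6 - 12 * t) • c) ⬝ᵥ (xds + (6 - 12 * t) • c) =
      xds ⬝ᵥ xds + 12 * (v₁ ⬝ᵥ w) := by
    rw [intervalIntegral.integral_add_smul_dotProduct_self _ _ (by fun_prop),
      intervalIntegral.integral_comp_sub_mul (fun x => x) (by norm_num),
      intervalIntegral.integral_comp_sub_mul (fun x => x ^ 2) (by norm_num), hcc]
    norm_num
  calc ∫ t in (0:ℝ)..1, deriv xd t ⬝ᵥ deriv xd t
      ≥ 2 * (∫ t in (0:ℝ)..1, (xds + (6 - 12 * t) • c) ⬝ᵥ deriv xd t) -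
          ∫ t in (0:ℝ)..1, (xds + (6 - 12 * t) • c) ⬝ᵥ (xds + (6 - 12 * t) • c) :=
        intervalIntegral.two_mul_integral_dotProduct_sub_le zero_le_one hxd'c (by fun_prop)
    _ = 12 * (v₁ ⬝ᵥ w) + xds ⬝ᵥ xds := by rw [hcross, hsq]; ring

/-- **Lower bound on the control energy of any admissible driver trajectory.**
With `Q = A21·A21ᵀ` invertible and `v₁ = x_nd* − (1/2)A21 x_d*`, every `C¹` trajectory
`x_d` with `x_d(0) = 0`, `x_d(1) = x_d*` and `A21 ∫₀¹ x_d = x_nd*` has control energy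
`∫₀¹ ‖x_d'(t)‖² dt ≥ 12⟨v₁, Q⁻¹v₁⟩ + ⟨x_d*, x_d*⟩` (Euclidean norm, expressed via the
dot product). -/
theorem control_energy_lower_bound_trajectory
    (N M : ℕ) (hN : 0 < N) (hM : 0 < M)
    (A21 : Matrix (Fin M) (Fin N) ℝ)
    (Q : Matrix (Fin M) (Fin M) ℝ) (hQ : Q = A21 * A21ᵀ) (hQinv : IsUnit Q)
    (xds : Fin N → ℝ) (xnds : Fin M → ℝ)
    (v₁ : Fin M → ℝ) (hv₁ : v₁ = xnds - (1 / 2 : ℝ) • A21.mulVec xds)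
    (xd : ℝ → Fin N → ℝ) (hxd : ContDiff ℝ 1 xd)
    (h0 : xd 0 = 0) (h1 : xd 1 = xds)
    (hconstraint : A21.mulVec (∫ τ in (0:ℝ)..1, xd τ) = xnds) :
    (∫ t in (0:ℝ)..1, (deriv xd t) ⬝ᵥ (deriv xd t)) ≥
      12 * (v₁ ⬝ᵥ Q⁻¹.mulVec v₁) + xds ⬝ᵥ xds :=
  control_energy_lower_bound_trajectory_general N M A21 Q hQ hQinv xds xnds v₁ hv₁ xd hxd h0 h1
    hconstraint
end

section
/- Let N, M be positive natural numbers, A21 a real M × N matrix such that Q = A21·A21ᵀ is invertible, and fix x_d* ∈ ℝ^N and x_nd* ∈ ℝ^M; set v₁ = x_nd* − (1/2)·A21·x_d* and C* = (1/2)·x_d* + A21ᵀ·Q⁻¹·v₁. Define the trajectory x : ℝ → ℝ^N by x(t) = (3x_d* − 6C*)·t² + (6C* − 2x_d*)·t. Then x(0) = 0, x(1) = x_d*, A21 · (∫₀¹ x(τ) dτ) = x_nd*, and ∫₀¹ ‖x'(t)‖² dt = 12·⟨v₁, Q⁻¹·v₁⟩ + ⟨x_d*, x_d*⟩. Hence the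 minimum control energy 12·v₁ᵀQ⁻¹v₁ + x_d*ᵀx_d* is attained. -/
/-!
Put `d = A21ᵀ Q⁻¹ v₁`, so that `C* = x_d*/2 + d` and the trajectory is
`x(t) = t • x_d* + 6t(1 - t) • d`. Since `A21 d = v₁` and `‖d‖² = ⟨v₁, Q⁻¹ v₁⟩`, the integral
`∫₀¹ x = x_d*/2 + d` is mapped by `A21` onto `x_nd*`; and since `x'(t) = x_d* + (6 - 12t) • d`
with `∫₀¹ (6 - 12t) = 0` and `∫₀¹ (6 - 12t)² = 12`, the energy is `‖x_d*‖² + 12 ‖d‖²`.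
-/

open Matrix

theorem integral_quadratic_zero_one (a b c : ℝ) :
    ∫ t in (0 : ℝ)..1, a + b * t + c * t ^ 2 = a + b / 2 + c / 3 := by
  have hderiv : ∀ t ∈ Set.uIcc (0 : ℝ) 1,
      HasDerivAt (fun t => a * t + b / 2 * t ^ 2 + c / 3 * t ^ 3) (a + b * t + c * t ^ 2) t := by
    intro t _
    exact ((((hasDerivAt_id t).const_mul a).add ((hasDerivAt_pow 2 t).const_mul (b / 2))).add
      ((hasDerivAt_pow 3 t).const_mul (c / 3))).congr_deriv
      (by simp only [mul_one, Nat.cast_ofNat, Nat.add_one_sub_one, pow_one]; ring)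
  rw [intervalIntegral.integral_eq_sub_of_hasDerivAt hderiv
    (by apply Continuous.intervalIntegrable; fun_prop)]
  ring

section BumpPath

variable {E : Type*} [NormedAddCommGroup E] [NormedSpace ℝ E]

theorem hasDerivAt_smul_add_bump_smul (p d : E) (t : ℝ) :
    HasDerivAt (fun s : ℝ => s • p + (6 * s * (1 - s)) • d) (p + (6 - 12 * t) • d) t := by
  have hbump : HasDerivAt (fun s : ℝ => 6 * s * (1 - s)) (6 - 12 * t) t :=
    (((hasDerivAt_id t).const_mul 6).mul ((hasDerivAt_id t).const_sub 1)).congr_deriv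
      (by simp only [mul_one, id_eq, mul_neg]; ring)
  have hlin : HasDerivAt (fun s : ℝ => s • p) p t := by
    simpa using (hasDerivAt_id t).smul_const p
  exact hlin.add (hbump.smul_const d)

theorem integral_smul_add_bump_smul [CompleteSpace E] (p d : E) :
    ∫ t in (0 : ℝ)..1, t • p + (6 * t * (1 - t)) • d = (1 / 2 : ℝ) • p + d := by
  have hbump : ∫ t in (0 : ℝ)..1, 6 * t * (1 - t) = 1 := by
    convert integral_quadratic_zero_one 0 6 (-6) using 3 <;> ring
  rw [intervalIntegral.integral_add, intervalIntegral.integral_smul_const,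
    intervalIntegral.integral_smul_const, hbump, integral_id]
  · norm_num
  all_goals apply Continuous.intervalIntegrable; fun_prop

end BumpPath

theorem integral_dotProduct_add_smul_self {ι : Type*} [Fintype ι] (p d : ι → ℝ) :
    ∫ t in (0 : ℝ)..1, (p + (6 - 12 * t) • d) ⬝ᵥ (p + (6 - 12 * t) • d) =
      p ⬝ᵥ p + 12 * (d ⬝ᵥ d) := by
  have hexpand : ∀ t : ℝ, (p + (6 - 12 * t) • d) ⬝ᵥ (p + (6 - 12 * t) • d) =
      (p ⬝ᵥ p + 12 * (p ⬝ᵥ d) + 36 * (d ⬝ᵥ d)) + (-24 * (p ⬝ᵥ d) - 144 * (d ⬝ᵥ d)) * t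
        + 144 * (d ⬝ᵥ d) * t ^ 2 := by
    intro t
    simp only [add_dotProduct, dotProduct_add, smul_dotProduct, dotProduct_smul, smul_eq_mul,
      dotProduct_comm d p]
    ring
  simp only [hexpand, integral_quadratic_zero_one]
  ring

namespace Matrix

variable {m n R : Type*} [Fintype m] [Fintype n] [DecidableEq m] [CommRing R]

theorem mulVec_mulVec_mulVec_inv_mul {A : Matrix m n R} {B : Matrix n m R}
    (hAB : IsUnit (A * B)) (v : m → R) : A *ᵥ (B *ᵥ ((A * B)⁻¹ *ᵥ v)) = v := by
  rw [mulVec_mulVec, mulVec_mulVec, mul_nonsing_inv _ ((isUnit_iff_isUnit_det _).mp hAB),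
    one_mulVec]

theorem dotProduct_transpose_mulVec_inv_mul_transpose_self {A : Matrix m n R}
    (hA : IsUnit (A * Aᵀ)) (v : m → R) :
    (Aᵀ *ᵥ ((A * Aᵀ)⁻¹ *ᵥ v)) ⬝ᵥ (Aᵀ *ᵥ ((A * Aᵀ)⁻¹ *ᵥ v)) = v ⬝ᵥ (A * Aᵀ)⁻¹ *ᵥ v := by
  rw [dotProduct_mulVec, vecMul_transpose, mulVec_mulVec_mulVec_inv_mul hA, dotProduct_comm]

end Matrix

theorem control_energy_attained_general
    (N M : ℕ)
    (A21 : Matrix (Fin M) (Fin N) ℝ)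
    (Q : Matrix (Fin M) (Fin M) ℝ) (hQ : Q = A21 * A21ᵀ) (hQinv : IsUnit Q)
    (xds : Fin N → ℝ) (xnds : Fin M → ℝ)
    (v₁ : Fin M → ℝ) (hv₁ : v₁ = xnds - (1 / 2 : ℝ) • A21.mulVec xds)
    (Cstar : Fin N → ℝ)
    (hCstar : Cstar = (1 / 2 : ℝ) • xds + (A21ᵀ).mulVec (Q⁻¹.mulVec v₁))
    (x : ℝ → Fin N → ℝ)
    (hx : ∀ t, x t = t ^ 2 • ((3 : ℝ) • xds - (6 : ℝ) • Cstar) +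
      t • ((6 : ℝ) • Cstar - (2 : ℝ) • xds)) :
    x 0 = 0 ∧ x 1 = xds ∧
      A21.mulVec (∫ τ in (0:ℝ)..1, x τ) = xnds ∧
      (∫ t in (0:ℝ)..1, (deriv x t) ⬝ᵥ (deriv x t)) =
        12 * (v₁ ⬝ᵥ Q⁻¹.mulVec v₁) + xds ⬝ᵥ xds := by
  subst hQ
  set d := A21ᵀ *ᵥ ((A21 * A21ᵀ)⁻¹ *ᵥ v₁)
  have hpath : x = fun t => t • xds + (6 * t * (1 - t)) • d := by
    funext t
    rw [hx, hCstar]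
    module
  subst hpath
  refine ⟨by simp, by simp, ?_, ?_⟩
  · rw [integral_smul_add_bump_smul, mulVec_add, mulVec_smul,
      mulVec_mulVec_mulVec_inv_mul hQinv, hv₁]
    module
  · simp only [fun t => (hasDerivAt_smul_add_bump_smul xds d t).deriv]
    rw [integral_dotProduct_add_smul_self,
      dotProduct_transpose_mulVec_inv_mul_transpose_self hQinv]
    ring

/-- **The minimum control energy is attained by the quadratic trajectory.**
With `Q = A21·A21ᵀ` invertible, `v₁ = x_nd* − (1/2)A21 x_d*`,
`C* = (1/2)x_d* + A21ᵀ Q⁻¹ v₁`, the trajectory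
`x(t) = (3x_d* − 6C*)t² + (6C* − 2x_d*)t` satisfies `x(0) = 0`, `x(1) = x_d*`,
`A21 ∫₀¹ x = x_nd*`, and has energy `∫₀¹ ‖x'(t)‖² dt = 12⟨v₁, Q⁻¹v₁⟩ + ⟨x_d*, x_d*⟩`. -/
theorem control_energy_attained
    (N M : ℕ) (hN : 0 < N) (hM : 0 < M)
    (A21 : Matrix (Fin M) (Fin N) ℝ)
    (Q : Matrix (Fin M) (Fin M) ℝ) (hQ : Q = A21 * A21ᵀ) (hQinv : IsUnit Q)
    (xds : Fin N → ℝ) (xnds : Fin M → ℝ)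
    (v₁ : Fin M → ℝ) (hv₁ : v₁ = xnds - (1 / 2 : ℝ) • A21.mulVec xds)
    (Cstar : Fin N → ℝ)
    (hCstar : Cstar = (1 / 2 : ℝ) • xds + (A21ᵀ).mulVec (Q⁻¹.mulVec v₁))
    (x : ℝ → Fin N → ℝ)
    (hx : ∀ t, x t = t ^ 2 • ((3 : ℝ) • xds - (6 : ℝ) • Cstar) +
      t • ((6 : ℝ) • Cstar - (2 : ℝ) • xds)) :
    x 0 = 0 ∧ x 1 = xds ∧
      A21.mulVec (∫ τ in (0:ℝ)..1, x τ) = xnds ∧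
      (∫ t in (0:ℝ)..1, (deriv x t) ⬝ᵥ (deriv x t)) =
        12 * (v₁ ⬝ᵥ Q⁻¹.mulVec v₁) + xds ⬝ᵥ xds :=
  control_energy_attained_general N M A21 Q hQ hQinv xds xnds v₁ hv₁ Cstar hCstar x hx
end

section
/- Let N, M be positive natural numbers with M ≤ N, and let A21 be a real M × N matrix whose rows a₁, …, a_M are linearly independent, so that Q = A21·A21ᵀ is symmetric positive definite. Let (e₁, …, e_M) be an orthonormal eigenbasis of Q with eigenvalues λᵢ > 0, and for v ∈ ℝ^M set cᵢ = ⟨eᵢ, v⟩, wᵢ = Π_{j ≠ i} λⱼ, and let d_k be the Euclidean distance from the row a_k to the span of the other rows {aⱼ : j ≠ k}. Then ⟨v, Q⁻¹·v⟩ = ( (Σ_{i=1}^{M} wᵢ cᵢ²) / (Σ_{i=1}^{M} wᵢ) ) · Σ_{k=1}^{M} 1/d_k². Consequently the minimum control energy satisfies E = 12·( Σᵢ wᵢcᵢ² / Σᵢ wᵢ )·Σₖ 1/d_k² + ⟨x_d*, x_d*⟩ with v = v₁ = x_nd* − (1/2)A21 x_d*. -/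
/-!
If `gram ℝ r * B = 1`, the vectors `z_k = ∑ⱼ B j k • r j` are biorthogonal to the rows:
`⟪r i, z_k⟫ = δᵢₖ`. Hence `z_k` is orthogonal to the span `S_k` of the other rows,
`‖z_k‖² = B k k`, and `r k - z_k / B k k ∈ S_k` is the orthogonal projection of `r k`, so
`d_k² = 1 / B k k`. With `B = Q⁻¹`, summing over `k` gives `Σₖ 1/d_k² = tr Q⁻¹ = Σᵢ 1/λᵢ`.
On the other hand `⟨v, Q⁻¹v⟩ = Σᵢ cᵢ²/λᵢ`, and multiplying numerator and denominator by `Πⱼ λⱼ`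
turns `(Σᵢ cᵢ²/λᵢ) / (Σᵢ 1/λᵢ)` into `(Σᵢ wᵢcᵢ²) / (Σᵢ wᵢ)`.
-/

open Matrix Finset
open scoped InnerProductSpace

theorem Submodule.infDist_eq_norm_sub_of_inner_eq_zero {F : Type*} [NormedAddCommGroup F]
    [InnerProductSpace ℝ F] (K : Submodule ℝ F) {x p : F} (hp : p ∈ K)
    (h : ∀ w ∈ K, ⟪x - p, w⟫_ℝ = 0) :
    Metric.infDist x (K : Set F) = ‖x - p‖ := by
  rw [Metric.infDist_eq_iInf, (K.norm_eq_iInf_iff_real_inner_eq_zero hp).2 h]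
  simp only [dist_eq_norm]

section Biorthogonal

variable {ι F : Type*} [Fintype ι] [DecidableEq ι] [NormedAddCommGroup F] [InnerProductSpace ℝ F]

def biorthogonal (r : ι → F) (B : Matrix ι ι ℝ) (k : ι) : F := ∑ j, B j k • r j

variable {r : ι → F} {B : Matrix ι ι ℝ}

theorem inner_biorthogonal (hB : gram ℝ r * B = 1) (i k : ι) :
    ⟪r i, biorthogonal r B k⟫_ℝ = if i = k then 1 else 0 := by
  rw [← one_apply, ← hB, mul_apply, biorthogonal, inner_sum]
  simp only [real_inner_smul_right, gram_apply, mul_comm]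

theorem inner_biorthogonal_self (hB : gram ℝ r * B = 1) (k : ι) :
    ⟪biorthogonal r B k, biorthogonal r B k⟫_ℝ = B k k := by
  nth_rw 2 [biorthogonal]
  simp [inner_sum, real_inner_smul_right, fun j => real_inner_comm (r j) (biorthogonal r B k),
    inner_biorthogonal hB]

theorem span_le_orthogonal_biorthogonal (hB : gram ℝ r * B = 1) (k : ι) :
    Submodule.span ℝ (r '' {j | j ≠ k}) ≤ (ℝ ∙ biorthogonal r B k)ᗮ := by
  rw [Submodule.span_le]
  rintro _ ⟨j, hj, rfl⟩
  rw [SetLike.mem_coe, Submodule.mem_orthogonal_singleton_iff_inner_right, real_inner_comm,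
    inner_biorthogonal hB, if_neg hj]

theorem diag_pos_of_gram_mul_eq_one (hB : gram ℝ r * B = 1) (k : ι) : 0 < B k k := by
  have hz : biorthogonal r B k ≠ 0 := fun h => by
    simpa [h] using inner_biorthogonal hB k k
  rw [← inner_biorthogonal_self hB]
  exact real_inner_self_pos.2 hz

theorem one_div_infDist_sq_eq_of_gram_mul_eq_one (hB : gram ℝ r * B = 1) (k : ι) :
    1 / Metric.infDist (r k) (Submodule.span ℝ (r '' {j | j ≠ k}) : Set F) ^ 2 = B k k := by
  set S := Submodule.span ℝ (r '' {j | j ≠ k})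
  set z := biorthogonal r B k
  have hBk := (diag_pos_of_gram_mul_eq_one hB k).ne'
  have hp : r k - (B k k)⁻¹ • z ∈ S := by
    have : r k - (B k k)⁻¹ • z = -(B k k)⁻¹ • ∑ j ∈ univ.erase k, B j k • r j := by
      rw [show z = ∑ j, B j k • r j from rfl, ← add_sum_erase _ _ (mem_univ k), smul_add,
        smul_smul, inv_mul_cancel₀ hBk, one_smul]
      module
    rw [this]
    exact S.smul_mem _ <| S.sum_mem fun j hj =>
      S.smul_mem _ <| Submodule.subset_span ⟨j, (mem_erase.1 hj).1, rfl⟩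
  have hperp : ∀ s ∈ S, ⟪r k - (r k - (B k k)⁻¹ • z), s⟫_ℝ = 0 := fun s hs => by
    rw [sub_sub_cancel, real_inner_smul_left,
      Submodule.mem_orthogonal_singleton_iff_inner_right.1
        (span_le_orthogonal_biorthogonal hB k hs), mul_zero]
  rw [S.infDist_eq_norm_sub_of_inner_eq_zero hp hperp, sub_sub_cancel,
    ← real_inner_self_eq_norm_sq, real_inner_smul_left, real_inner_smul_right,
    inner_biorthogonal_self hB]
  field_simp

end Biorthogonal

namespace Matrix

variable {n K : Type*} [Fintype n] [DecidableEq n] [Field K]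
  {Q : Matrix n n K} {e : n → n → K} {lam : n → K}

theorem of_mul_transpose_eq_one_of_orthonormal
    (horth : ∀ i j, e i ⬝ᵥ e j = if i = j then 1 else 0) :
    of e * (of e)ᵀ = 1 := by
  ext i j
  simpa [mul_apply, one_apply, dotProduct] using horth i j

theorem mul_transpose_eq_transpose_mul_diagonal (heig : ∀ i, Q *ᵥ e i = lam i • e i) :
    Q * (of e)ᵀ = (of e)ᵀ * diagonal lam := by
  ext j i
  rw [mul_diagonal]
  simpa [mul_apply, mulVec, dotProduct, mul_comm] using congrFun (heig i) j

theorem mul_transpose_diagonal_inv_mul_eq_one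
    (horth : ∀ i j, e i ⬝ᵥ e j = if i = j then 1 else 0)
    (heig : ∀ i, Q *ᵥ e i = lam i • e i) (hlam : ∀ i, lam i ≠ 0) :
    Q * ((of e)ᵀ * diagonal (fun i => (lam i)⁻¹) * of e) = 1 := by
  have hEtE : (of e)ᵀ * of e = 1 :=
    mul_eq_one_comm.1 (of_mul_transpose_eq_one_of_orthonormal horth)
  calc Q * ((of e)ᵀ * diagonal (fun i => (lam i)⁻¹) * of e)
      = (Q * (of e)ᵀ) * diagonal (fun i => (lam i)⁻¹) * of e := by simp only [Matrix.mul_assoc]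
    _ = (of e)ᵀ * diagonal (fun i => lam i * (lam i)⁻¹) * of e := by
        rw [mul_transpose_eq_transpose_mul_diagonal heig, Matrix.mul_assoc (of e)ᵀ,
          diagonal_mul_diagonal]
    _ = 1 := by simp only [mul_inv_cancel₀ (hlam _), diagonal_one, Matrix.mul_one, hEtE]

theorem inv_eq_of_orthonormal_eigenvectors
    (horth : ∀ i j, e i ⬝ᵥ e j = if i = j then 1 else 0)
    (heig : ∀ i, Q *ᵥ e i = lam i • e i) (hlam : ∀ i, lam i ≠ 0) :
    Q⁻¹ = (of e)ᵀ * diagonal (fun i => (lam i)⁻¹) * of e :=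
  inv_eq_right_inv (mul_transpose_diagonal_inv_mul_eq_one horth heig hlam)

theorem dotProduct_inv_mulVec_eq_sum
    (horth : ∀ i j, e i ⬝ᵥ e j = if i = j then 1 else 0)
    (heig : ∀ i, Q *ᵥ e i = lam i • e i) (hlam : ∀ i, lam i ≠ 0) (v : n → K) :
    v ⬝ᵥ Q⁻¹ *ᵥ v = ∑ i, (lam i)⁻¹ * (e i ⬝ᵥ v) ^ 2 := by
  have hEv : of e *ᵥ v = fun i => e i ⬝ᵥ v := rfl
  rw [inv_eq_of_orthonormal_eigenvectors horth heig hlam, Matrix.mul_assoc, ← mulVec_mulVec,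
    ← mulVec_mulVec, dotProduct_mulVec, vecMul_transpose, hEv]
  simp only [dotProduct, mulVec_diagonal]
  exact sum_congr rfl fun i _ => by ring

theorem trace_inv_eq_sum
    (horth : ∀ i j, e i ⬝ᵥ e j = if i = j then 1 else 0)
    (heig : ∀ i, Q *ᵥ e i = lam i • e i) (hlam : ∀ i, lam i ≠ 0) :
    Q⁻¹.trace = ∑ i, (lam i)⁻¹ := by
  rw [inv_eq_of_orthonormal_eigenvectors horth heig hlam, trace_mul_cycle,
    of_mul_transpose_eq_one_of_orthonormal horth, Matrix.one_mul, trace_diagonal]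

end Matrix

theorem Finset.prod_erase_eq_prod_mul_inv {ι K : Type*} [DecidableEq ι] [Field K] {s : Finset ι}
    {f : ι → K} {i : ι} (hi : i ∈ s) (hf : f i ≠ 0) :
    ∏ j ∈ s.erase i, f j = (∏ j ∈ s, f j) * (f i)⁻¹ := by
  rw [← mul_prod_erase s f hi, mul_comm (f i), mul_assoc, mul_inv_cancel₀ hf, mul_one]

theorem Finset.sum_prod_erase_mul_div_sum_prod_erase_mul_sum_inv {ι K : Type*} [DecidableEq ι]
    [Field K] {s : Finset ι} {lam : ι → K} (hlam : ∀ i ∈ s, lam i ≠ 0)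
    (hsum : ∑ i ∈ s, (lam i)⁻¹ ≠ 0) (a : ι → K) :
    (∑ i ∈ s, (∏ j ∈ s.erase i, lam j) * a i) / (∑ i ∈ s, ∏ j ∈ s.erase i, lam j) *
      ∑ i ∈ s, (lam i)⁻¹ = ∑ i ∈ s, (lam i)⁻¹ * a i := by
  have hprod : ∏ j ∈ s, lam j ≠ 0 := prod_ne_zero_iff.2 hlam
  have hw : ∀ i ∈ s, ∏ j ∈ s.erase i, lam j = (∏ j ∈ s, lam j) * (lam i)⁻¹ := fun i hi =>
    prod_erase_eq_prod_mul_inv hi (hlam i hi)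
  rw [sum_congr rfl hw, sum_congr rfl fun i hi => by rw [hw i hi, mul_assoc], ← mul_sum,
    ← mul_sum, mul_div_mul_left _ _ hprod, div_mul_cancel₀ _ hsum]

theorem energy_task_topology_segregation_general
    (N M : ℕ) (hM : 0 < M)
    (A21 : Matrix (Fin M) (Fin N) ℝ)
    (Q : Matrix (Fin M) (Fin M) ℝ) (hQ : Q = A21 * A21ᵀ)
    (e : Fin M → Fin M → ℝ) (lam : Fin M → ℝ) (hlam : ∀ i, 0 < lam i)
    (horth : ∀ i j, e i ⬝ᵥ e j = if i = j then (1 : ℝ) else 0)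
    (heig : ∀ i, Q.mulVec (e i) = lam i • e i)
    (v : Fin M → ℝ)
    (c : Fin M → ℝ) (hc : ∀ i, c i = e i ⬝ᵥ v)
    (w : Fin M → ℝ) (hw : ∀ i, w i = ∏ j ∈ univ.erase i, lam j)
    (r : Fin M → EuclideanSpace ℝ (Fin N))
    (hr : ∀ k, r k = (WithLp.equiv 2 (Fin N → ℝ)).symm (A21 k))
    (d : Fin M → ℝ)
    (hd : ∀ k, d k = Metric.infDist (r k)
      (Submodule.span ℝ (r '' {j | j ≠ k}) : Set (EuclideanSpace ℝ (Fin N)))) :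
    v ⬝ᵥ Q⁻¹.mulVec v =
      ((∑ i, w i * c i ^ 2) / (∑ i, w i)) * ∑ k, 1 / (d k) ^ 2 ∧
    ∀ (xd : Fin N → ℝ) (xnd : Fin M → ℝ), v = xnd - (1 / 2 : ℝ) • A21.mulVec xd →
      12 * (v ⬝ᵥ Q⁻¹.mulVec v) + xd ⬝ᵥ xd =
        12 * (((∑ i, w i * c i ^ 2) / (∑ i, w i)) * ∑ k, 1 / (d k) ^ 2) + xd ⬝ᵥ xd := by
  have hlam0 : ∀ i, lam i ≠ 0 := fun i => (hlam i).ne'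
  have hgram : gram ℝ r = Q := by
    ext i j
    simp [hQ, hr, mul_apply, PiLp.inner_apply, mul_comm]
  have hinv : gram ℝ r * Q⁻¹ = 1 := by
    rw [hgram, inv_eq_of_orthonormal_eigenvectors horth heig hlam0]
    exact mul_transpose_diagonal_inv_mul_eq_one horth heig hlam0
  have htopology : ∑ k, 1 / d k ^ 2 = ∑ i, (lam i)⁻¹ := by
    simp only [hd, one_div_infDist_sq_eq_of_gram_mul_eq_one hinv]
    exact trace_inv_eq_sum horth heig hlam0
  have hsum : ∑ i, (lam i)⁻¹ ≠ 0 :=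
    (sum_pos (fun i _ => inv_pos.2 (hlam i)) (univ_nonempty_iff.2 ⟨⟨0, hM⟩⟩)).ne'
  have hmain : v ⬝ᵥ Q⁻¹ *ᵥ v = (∑ i, w i * c i ^ 2) / (∑ i, w i) * ∑ k, 1 / d k ^ 2 := by
    simp only [hw, hc, htopology]
    rw [sum_prod_erase_mul_div_sum_prod_erase_mul_sum_inv (fun i _ => hlam0 i) hsum,
      dotProduct_inv_mulVec_eq_sum horth heig hlam0]
  exact ⟨hmain, fun _ _ _ => by rw [hmain]⟩

/-- **Segregation of the minimum control energy into task-based and topology-based terms.**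
For `A21` with linearly independent rows, Gram matrix `Q = A21·A21ᵀ`, orthonormal
eigenbasis `(eᵢ)` of `Q` with eigenvalues `λᵢ > 0`, coefficients `cᵢ = ⟨eᵢ, v⟩`, weights
`wᵢ = Πⱼ≠ᵢ λⱼ`, and `d_k` the Euclidean distance from the row `a_k` to the span of the
other rows, one has `⟨v, Q⁻¹v⟩ = ((Σᵢ wᵢcᵢ²)/(Σᵢ wᵢ)) · Σₖ 1/d_k²`; consequently the
minimum control energy is `12·((Σᵢ wᵢcᵢ²)/(Σᵢ wᵢ))·Σₖ 1/d_k² + ⟨x_d*, x_d*⟩` when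
`v = v₁ = x_nd* − (1/2)A21 x_d*`. -/
theorem energy_task_topology_segregation
    (N M : ℕ) (hN : 0 < N) (hM : 0 < M) (hMN : M ≤ N)
    (A21 : Matrix (Fin M) (Fin N) ℝ)
    (hrows : LinearIndependent ℝ (fun k => A21 k))
    (Q : Matrix (Fin M) (Fin M) ℝ) (hQ : Q = A21 * A21ᵀ) (hQpd : Q.PosDef)
    (e : Fin M → Fin M → ℝ) (lam : Fin M → ℝ) (hlam : ∀ i, 0 < lam i)
    (horth : ∀ i j, e i ⬝ᵥ e j = if i = j then (1 : ℝ) else 0)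
    (heig : ∀ i, Q.mulVec (e i) = lam i • e i)
    (v : Fin M → ℝ)
    (c : Fin M → ℝ) (hc : ∀ i, c i = e i ⬝ᵥ v)
    (w : Fin M → ℝ) (hw : ∀ i, w i = ∏ j ∈ univ.erase i, lam j)
    (r : Fin M → EuclideanSpace ℝ (Fin N))
    (hr : ∀ k, r k = (WithLp.equiv 2 (Fin N → ℝ)).symm (A21 k))
    (d : Fin M → ℝ)
    (hd : ∀ k, d k = Metric.infDist (r k)
      (Submodule.span ℝ (r '' {j | j ≠ k}) : Set (EuclideanSpace ℝ (Fin N)))) :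
    v ⬝ᵥ Q⁻¹.mulVec v =
      ((∑ i, w i * c i ^ 2) / (∑ i, w i)) * ∑ k, 1 / (d k) ^ 2 ∧
    ∀ (xd : Fin N → ℝ) (xnd : Fin M → ℝ), v = xnd - (1 / 2 : ℝ) • A21.mulVec xd →
      12 * (v ⬝ᵥ Q⁻¹.mulVec v) + xd ⬝ᵥ xd =
        12 * (((∑ i, w i * c i ^ 2) / (∑ i, w i)) * ∑ k, 1 / (d k) ^ 2) + xd ⬝ᵥ xd :=
  energy_task_topology_segregation_general N M hM A21 Q hQ e lam hlam horth heig v c hc w hw r hr d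
    hd
end

section
/- Let n, N be positive natural numbers, A a real n × n matrix, B a real n × N matrix, and T > 0. Suppose the reachability Gramian W = ∫₀ᵀ exp(tA)·B·Bᵀ·exp(tAᵀ) dt is invertible. Then for every continuous control u : ℝ → ℝ^N and target state x* ∈ ℝ^n satisfying ∫₀ᵀ exp((T−s)A)·B·u(s) ds = x*, the control energy satisfies ∫₀ᵀ ‖u(s)‖² ds ≥ ⟨x*, W⁻¹·x*⟩. -/
/-!
Put `M s = e^{(T-s)A} B`, so that the Gramian `G = ∫₀ᵀ M Mᵀ` is the reachability Gramian
(substitute `t = T - s`). With `v = G⁻¹ x*`, the control `p s = (M s)ᵀ v` satisfies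
`∫ ⟨u, p⟩ = ⟨v, ∫ M u⟩ = ⟨v, x*⟩` and `∫ ⟨p, p⟩ = ⟨v, G v⟩ = ⟨v, x*⟩`. Integrating the pointwise
inequality `2 ⟨u, p⟩ - ⟨p, p⟩ ≤ ⟨u, u⟩`, i.e. `‖u - p‖² ≥ 0`, gives `⟨v, x*⟩ ≤ ∫ ⟨u, u⟩`.
-/

open Matrix

attribute [local instance] Matrix.normedAddCommGroup Matrix.normedSpace

open NormedSpace MeasureTheory

@[fun_prop]
theorem Matrix.continuous_exp {m : Type*} [Fintype m] [DecidableEq m] :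
    Continuous (exp : Matrix m m ℝ → Matrix m m ℝ) := by
  let _ : NormedRing (Matrix m m ℝ) := Matrix.linftyOpNormedRing
  let _ : NormedAlgebra ℝ (Matrix m m ℝ) := Matrix.linftyOpNormedAlgebra
  exact @exp_continuous _ _ (NormedAlgebra.restrictScalars ℚ ℝ _)
    (FiniteDimensional.complete ℝ _)

section Gramian

variable {m k : Type*} [Fintype m] [Fintype k] {a b : ℝ}

theorem dotProduct_intervalIntegral (v : m → ℝ) {f : ℝ → m → ℝ}
    (hf : IntervalIntegrable f volume a b) :
    v ⬝ᵥ (∫ s in a..b, f s) = ∫ s in a..b, v ⬝ᵥ f s :=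
  ((dotProductBilin ℝ ℝ v).toContinuousLinearMap.intervalIntegral_comp_comm hf).symm

theorem intervalIntegral_mulVec {M : ℝ → Matrix m k ℝ} (hM : Continuous M) (v : k → ℝ) :
    (∫ s in a..b, M s) *ᵥ v = ∫ s in a..b, M s *ᵥ v := by
  -- Instance search does not find this instance through the local `Matrix.normedAddCommGroup`.
  let _ : ENormedAddMonoid (Matrix m k ℝ) := NormedAddGroup.toENormedAddMonoid
  let mulVecRight : Matrix m k ℝ →ₗ[ℝ] m → ℝ :=
    { toFun := (· *ᵥ v)
      map_add' := fun M N => add_mulVec M N v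
      map_smul' := fun c M => smul_mulVec c M v }
  exact (mulVecRight.toContinuousLinearMap.intervalIntegral_comp_comm
    (hM.intervalIntegrable a b)).symm

theorem two_mul_dotProduct_sub_dotProduct_self_le_s16 (u p : m → ℝ) :
    2 * (u ⬝ᵥ p) - p ⬝ᵥ p ≤ u ⬝ᵥ u := by
  have h := dotProduct_self_star_nonneg (u - p)
  simp only [star_trivial, sub_dotProduct, dotProduct_sub, dotProduct_comm p u] at h
  linarith

noncomputable def gramian (M : ℝ → Matrix m k ℝ) (a b : ℝ) : Matrix m m ℝ :=
  ∫ s in a..b, M s * (M s)ᵀ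

theorem dotProduct_inv_gramian_le_energy [DecidableEq m] {M : ℝ → Matrix m k ℝ}
    (hM : Continuous M) {u : ℝ → k → ℝ} (hu : Continuous u) (hab : a ≤ b)
    (hG : IsUnit (gramian M a b)) {x : m → ℝ} (hx : ∫ s in a..b, M s *ᵥ u s = x) :
    x ⬝ᵥ (gramian M a b)⁻¹ *ᵥ x ≤ ∫ s in a..b, u s ⬝ᵥ u s := by
  set v := (gramian M a b)⁻¹ *ᵥ x
  have hGv : gramian M a b *ᵥ v = x := by
    rw [mulVec_mulVec, mul_nonsing_inv _ ((isUnit_iff_isUnit_det _).mp hG), one_mulVec]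
  set p := fun s => (M s)ᵀ *ᵥ v
  have hp : Continuous p := hM.matrix_transpose.matrix_mulVec continuous_const
  have hcross : ∫ s in a..b, u s ⬝ᵥ p s = v ⬝ᵥ x := by
    calc ∫ s in a..b, u s ⬝ᵥ p s = ∫ s in a..b, v ⬝ᵥ M s *ᵥ u s := by
          simp only [p, dotProduct_mulVec, vecMul_transpose, dotProduct_comm]
      _ = v ⬝ᵥ x := by
          rw [← dotProduct_intervalIntegral v ((hM.matrix_mulVec hu).intervalIntegrable a b), hx]
  have hself : ∫ s in a..b, p s ⬝ᵥ p s = v ⬝ᵥ x := by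
    have hMMt : Continuous fun s => M s * (M s)ᵀ := hM.matrix_mul hM.matrix_transpose
    calc ∫ s in a..b, p s ⬝ᵥ p s = ∫ s in a..b, v ⬝ᵥ (M s * (M s)ᵀ) *ᵥ v := by
          simp only [p, ← mulVec_mulVec, dotProduct_mulVec v, ← mulVec_transpose]
      _ = v ⬝ᵥ x := by
          rw [← dotProduct_intervalIntegral v
              ((hMMt.matrix_mulVec continuous_const).intervalIntegrable a b),
            ← intervalIntegral_mulVec hMMt, ← gramian, hGv]
  have hup : Continuous fun s => 2 * (u s ⬝ᵥ p s) := continuous_const.mul (hu.dotProduct hp)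
  have hpp : Continuous fun s => p s ⬝ᵥ p s := hp.dotProduct hp
  calc x ⬝ᵥ v = ∫ s in a..b, 2 * (u s ⬝ᵥ p s) - p s ⬝ᵥ p s := by
        rw [intervalIntegral.integral_sub (hup.intervalIntegrable a b)
            (hpp.intervalIntegrable a b), intervalIntegral.integral_const_mul, hcross, hself,
          dotProduct_comm]
        ring
    _ ≤ ∫ s in a..b, u s ⬝ᵥ u s :=
        intervalIntegral.integral_mono_on hab ((hup.sub hpp).intervalIntegrable a b)
          ((hu.dotProduct hu).intervalIntegrable a b)
          fun s _ => two_mul_dotProduct_sub_dotProduct_self_le_s16 (u s) (p s)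

theorem gramian_exp_sub_smul_mul [DecidableEq m] (A : Matrix m m ℝ) (B : Matrix m k ℝ)
    (T : ℝ) :
    gramian (fun s => exp ((T - s) • A) * B) 0 T =
      ∫ t in (0:ℝ)..T, exp (t • A) * B * Bᵀ * exp (t • Aᵀ) := by
  simp only [gramian, transpose_mul, ← exp_transpose, transpose_smul, ← Matrix.mul_assoc]
  simpa using intervalIntegral.integral_comp_sub_left
    (fun t => exp (t • A) * B * Bᵀ * exp (t • Aᵀ)) T (a := 0) (b := T)

end Gramian

theorem gramian_energy_lower_bound_general
    (n N : ℕ)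
    (A : Matrix (Fin n) (Fin n) ℝ) (B : Matrix (Fin n) (Fin N) ℝ)
    (T : ℝ) (hT : 0 < T)
    (W : Matrix (Fin n) (Fin n) ℝ)
    (hW : W = ∫ t in (0:ℝ)..T,
      NormedSpace.exp (t • A) * B * Bᵀ * NormedSpace.exp (t • Aᵀ))
    (hWinv : IsUnit W)
    (u : ℝ → Fin N → ℝ) (hu : Continuous u)
    (xstar : Fin n → ℝ)
    (hsteer : (∫ s in (0:ℝ)..T,
      (NormedSpace.exp ((T - s) • A) * B).mulVec (u s)) = xstar) :
    (∫ s in (0:ℝ)..T, u s ⬝ᵥ u s) ≥ xstar ⬝ᵥ W⁻¹.mulVec xstar := by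
  have hM : Continuous fun s : ℝ => exp ((T - s) • A) * B := by fun_prop
  rw [hW, ← gramian_exp_sub_smul_mul] at hWinv ⊢
  exact dotProduct_inv_gramian_le_energy hM hu hT.le hWinv hsteer

/-- **Gramian lower bound on the control energy.**
For the linear system `ẋ = Ax + Bu` with invertible reachability Gramian
`W = ∫₀ᵀ e^{tA} B Bᵀ e^{tAᵀ} dt`, every continuous control `u` steering the origin to
`x*` at time `T` (i.e. `∫₀ᵀ e^{(T−s)A} B u(s) ds = x*`) has energy
`∫₀ᵀ ‖u(s)‖² ds ≥ ⟨x*, W⁻¹ x*⟩` (Euclidean norm, written via the dot product). -/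
theorem gramian_energy_lower_bound
    (n N : ℕ) (hn : 0 < n) (hN : 0 < N)
    (A : Matrix (Fin n) (Fin n) ℝ) (B : Matrix (Fin n) (Fin N) ℝ)
    (T : ℝ) (hT : 0 < T)
    (W : Matrix (Fin n) (Fin n) ℝ)
    (hW : W = ∫ t in (0:ℝ)..T,
      NormedSpace.exp (t • A) * B * Bᵀ * NormedSpace.exp (t • Aᵀ))
    (hWinv : IsUnit W)
    (u : ℝ → Fin N → ℝ) (hu : Continuous u)
    (xstar : Fin n → ℝ)
    (hsteer : (∫ s in (0:ℝ)..T,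
      (NormedSpace.exp ((T - s) • A) * B).mulVec (u s)) = xstar) :
    (∫ s in (0:ℝ)..T, u s ⬝ᵥ u s) ≥ xstar ⬝ᵥ W⁻¹.mulVec xstar :=
  gramian_energy_lower_bound_general n N A B T hT W hW hWinv u hu xstar hsteer
end
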